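/- arXiv:2009.03725 — 3 statements merged into one kernel-verified Lean document; each statement's English description precedes it below -/
import Mathlib

section
/- For any vector A = (a_1,...,a_m) with coordinates in {0,1,2}, the element S(A) := R(Δ(A;t))·(T−1) lies in the set M = {0, ±(T−1), ±T(T−1), ±T^2(T−1)} ⊆ K = Z[T]/(T^3−1). -/
open Polynomial

/-- The sum of coefficients of `g` over exponents `≡ i (mod 3)`. -/
noncomputable def Rcoef (i : ℕ) (g : Polynomial ℤ) : ℤ :=
  ∑ h ∈ g.support.filter (fun h => h % 3 = i), g.coeff h

/-- The ring `K = ℤ[T]/(T^3 - 1)`. -/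
abbrev K3 := Polynomial ℤ ⧸ Ideal.span {(X : Polynomial ℤ) ^ 3 - 1}

/-- The quotient map `ℤ[T] → K`. -/
noncomputable def mk3 : Polynomial ℤ →+* K3 := Ideal.Quotient.mk _

/-- The map `R = R^{(3)} : ℤ[t] → K`, `g ↦ R_0(g) + R_1(g)T + R_2(g)T^2`. -/
noncomputable def Rmap3 (g : Polynomial ℤ) : K3 :=
  mk3 (C (Rcoef 0 g)) + mk3 (C (Rcoef 1 g)) * mk3 X + mk3 (C (Rcoef 2 g)) * mk3 X ^ 2

/-- `a + bT + cT²` is special if `a = b = c` or `|a-b|+|a-c|+|b-c| = 2`. -/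
def Special (a b c : ℤ) : Prop :=
  (a = b ∧ b = c) ∨ |a - b| + |a - c| + |b - c| = 2

/-- `Δ(a;t) = t + t² + ⋯ + tᵃ` (with `Δ(0;t) = 0`). -/
noncomputable def Delta1 (a : ℕ) : Polynomial ℤ := ∑ h ∈ Finset.Icc 1 a, X ^ h

/-- `Δ(A;t)` computed from the reversed list (last coordinate first). -/
noncomputable def DeltaRev : List ℕ → Polynomial ℤ
  | [] => 1
  | [a] => Delta1 a
  | a :: b :: rest => DeltaRev (b :: rest) * Delta1 a - DeltaRev rest * X ^ (a + 1)

/-- `Δ(a₁,…,a_m;t)`, defined by `Δ(∅)=1`, `Δ(A,a) = Δ(A)·Δ(a) - Δ(A')·t^{a+1}`. -/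
noncomputable def Delta (A : List ℕ) : Polynomial ℤ := DeltaRev A.reverse

/-- `S(A) := R(Δ(A;t))·(T-1) ∈ K`. -/
noncomputable def Smap (A : List ℕ) : K3 := Rmap3 (Delta A) * (mk3 X - 1)

/-- The set `M = {0, ±(T-1), ±T(T-1), ±T²(T-1)} ⊆ K`. -/
noncomputable def Mset : Set K3 :=
  {0, mk3 X - 1, -(mk3 X - 1), mk3 X * (mk3 X - 1), -(mk3 X * (mk3 X - 1)),
    mk3 X ^ 2 * (mk3 X - 1), -(mk3 X ^ 2 * (mk3 X - 1))}

/-!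
Since `R` is reduction modulo `T³ - 1`, it is a ring homomorphism and `S(A) = Δ(A;T)(T - 1)`.
The recursion for `Δ` then says that consecutive values `x = S(A')`, `y = S(A)` evolve as
`(x, y) ↦ (y, y Δ(a;T) - x T^{a+1})`. For `a ≤ 2` this map preserves the four shapes
`(0, u)`, `(u, 0)`, `(u, Tu)`, `(u, -u)` with `u = ±Tᵏ(T - 1)`, by a case check using `T³ = 1`
and `(T - 1)(1 + T + T²) = 0`; starting from `(0, T - 1)`, every `S(A)` is `0` or such a `u`.
-/

section OrbitSubOne

variable {R : Type*} [CommRing R] {T : R}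

/-- The elements `(-T)ⁿ (T - 1)`; when `T³ = 1` these are the `±Tᵏ (T - 1)`. -/
def orbitSubOne (T : R) : Set R := (· * (T - 1)) '' Submonoid.powers (-T)

lemma sub_one_mem_orbitSubOne : T - 1 ∈ orbitSubOne T :=
  ⟨1, Submonoid.one_mem _, one_mul _⟩

lemma mul_mem_orbitSubOne (hT : T ^ 3 = 1) {u : R} (hu : u ∈ orbitSubOne T) :
    T * u ∈ orbitSubOne T := by
  obtain ⟨c, hc, rfl⟩ := hu
  have hT4 : (-T) ^ 4 = T := by linear_combination T * hT
  exact ⟨(-T) ^ 4 * c, Submonoid.mul_mem _ (Submonoid.pow_mem _ (Submonoid.mem_powers _) _) hc,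
    by simp only [hT4]; ring⟩

lemma neg_mem_orbitSubOne (hT : T ^ 3 = 1) {u : R} (hu : u ∈ orbitSubOne T) :
    -u ∈ orbitSubOne T := by
  obtain ⟨c, hc, rfl⟩ := hu
  have hT3 : (-T) ^ 3 = -1 := by linear_combination -hT
  exact ⟨(-T) ^ 3 * c, Submonoid.mul_mem _ (Submonoid.pow_mem _ (Submonoid.mem_powers _) _) hc,
    by rw [hT3]; ring⟩

lemma mul_one_add_add_sq_eq_zero (hT : T ^ 3 = 1) {u : R} (hu : u ∈ orbitSubOne T) :
    u * (1 + T + T ^ 2) = 0 := by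
  obtain ⟨c, -, rfl⟩ := hu
  linear_combination c * hT

/-- The shapes of `(S(A'), S(A))` for a vector `A` and its prefix `A'` one coordinate shorter. -/
def AdmissiblePair (T x y : R) : Prop :=
  ∃ u ∈ orbitSubOne T,
    (x = 0 ∧ y = u) ∨ (x = u ∧ y = 0) ∨ (x = u ∧ y = T * u) ∨ (x = u ∧ y = -u)

variable {x y : R}

lemma AdmissiblePair.step_zero (hT : T ^ 3 = 1) (h : AdmissiblePair T x y) :
    AdmissiblePair T y (-(x * T)) := by
  obtain ⟨u, hu, hxy⟩ := h
  rcases hxy with ⟨hx, hy⟩ | ⟨hx, hy⟩ | ⟨hx, hy⟩ | ⟨hx, hy⟩ <;> rw [hx, hy]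
  · exact ⟨u, hu, .inr (.inl ⟨rfl, by ring⟩)⟩
  · exact ⟨-(T * u), neg_mem_orbitSubOne hT (mul_mem_orbitSubOne hT hu),
      .inl ⟨rfl, by ring⟩⟩
  · exact ⟨T * u, mul_mem_orbitSubOne hT hu, .inr (.inr (.inr ⟨rfl, by ring⟩))⟩
  · exact ⟨-u, neg_mem_orbitSubOne hT hu, .inr (.inr (.inl ⟨rfl, by ring⟩))⟩

lemma AdmissiblePair.step_one (hT : T ^ 3 = 1) (h : AdmissiblePair T x y) :
    AdmissiblePair T y (y * T - x * T ^ 2) := by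
  obtain ⟨u, hu, hxy⟩ := h
  have hTu := mul_mem_orbitSubOne hT hu
  rcases hxy with ⟨hx, hy⟩ | ⟨hx, hy⟩ | ⟨hx, hy⟩ | ⟨hx, hy⟩ <;> rw [hx, hy]
  · exact ⟨u, hu, .inr (.inr (.inl ⟨rfl, by ring⟩))⟩
  · exact ⟨-(T * (T * u)), neg_mem_orbitSubOne hT (mul_mem_orbitSubOne hT hTu),
      .inl ⟨rfl, by ring⟩⟩
  · exact ⟨T * u, hTu, .inr (.inl ⟨rfl, by ring⟩)⟩
  · exact ⟨-u, neg_mem_orbitSubOne hT hu,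
      .inr (.inr (.inr ⟨rfl, by linear_combination -mul_one_add_add_sq_eq_zero hT hu⟩))⟩

lemma AdmissiblePair.step_two (hT : T ^ 3 = 1) (h : AdmissiblePair T x y) :
    AdmissiblePair T y (y * (T + T ^ 2) - x * T ^ 3) := by
  obtain ⟨u, hu, hxy⟩ := h
  have hgeom := mul_one_add_add_sq_eq_zero hT hu
  rcases hxy with ⟨hx, hy⟩ | ⟨hx, hy⟩ | ⟨hx, hy⟩ | ⟨hx, hy⟩ <;> rw [hx, hy, hT]
  · exact ⟨u, hu, .inr (.inr (.inr ⟨rfl, by linear_combination hgeom⟩))⟩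
  · exact ⟨-u, neg_mem_orbitSubOne hT hu, .inl ⟨rfl, by ring⟩⟩
  · exact ⟨T * u, mul_mem_orbitSubOne hT hu,
      .inr (.inr (.inl ⟨rfl, by linear_combination u * hT⟩))⟩
  · exact ⟨-u, neg_mem_orbitSubOne hT hu, .inr (.inl ⟨rfl, by linear_combination -hgeom⟩)⟩

lemma AdmissiblePair.step (hT : T ^ 3 = 1) {a : ℕ} (ha : a ≤ 2) (h : AdmissiblePair T x y) :
    AdmissiblePair T y (y * ∑ i ∈ Finset.Icc 1 a, T ^ i - x * T ^ (a + 1)) := by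
  interval_cases a
  · simpa using h.step_zero hT
  · simpa using h.step_one hT
  · simpa [Finset.sum_Icc_succ_top] using h.step_two hT

lemma AdmissiblePair.snd_mem (hT : T ^ 3 = 1) (h : AdmissiblePair T x y) :
    y = 0 ∨ y ∈ orbitSubOne T := by
  obtain ⟨u, hu, ⟨-, rfl⟩ | ⟨-, rfl⟩ | ⟨-, rfl⟩ | ⟨-, rfl⟩⟩ := h
  exacts [.inr hu, .inl rfl, .inr (mul_mem_orbitSubOne hT hu), .inr (neg_mem_orbitSubOne hT hu)]

end OrbitSubOne

/-- `Δ` of the vector with its last coordinate removed, taken to be `0` for the empty vector so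
that the recursion `DeltaRev_cons` also holds for vectors of length one. -/
noncomputable def prevDeltaRev : List ℕ → ℤ[X]
  | [] => 0
  | _ :: L => DeltaRev L

lemma DeltaRev_cons (a : ℕ) (L : List ℕ) :
    DeltaRev (a :: L) = DeltaRev L * Delta1 a - prevDeltaRev L * X ^ (a + 1) := by
  cases L <;> simp [DeltaRev, prevDeltaRev]

lemma admissiblePair_map_DeltaRev {R : Type*} [CommRing R] (φ : ℤ[X] →+* R)
    (hT : φ X ^ 3 = 1) (L : List ℕ) (hL : ∀ i ∈ L, i ≤ 2) :
    AdmissiblePair (φ X) (φ (prevDeltaRev L) * (φ X - 1)) (φ (DeltaRev L) * (φ X - 1)) := by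
  induction L with
  | nil =>
    exact ⟨φ X - 1, sub_one_mem_orbitSubOne,
      .inl ⟨by simp [prevDeltaRev], by simp [DeltaRev]⟩⟩
  | cons a L ih =>
    have hstep :=
      (ih fun i hi => hL i (List.mem_cons_of_mem a hi)).step hT (hL a List.mem_cons_self)
    rw [prevDeltaRev, DeltaRev_cons]
    convert hstep using 1
    simp only [Delta1, map_sub, map_mul, map_pow, map_sum]
    ring

lemma mk3_X_pow_three : mk3 X ^ 3 = 1 := by
  rw [← map_pow, ← map_one mk3]
  exact Ideal.Quotient.eq.mpr (Ideal.subset_span rfl)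

lemma Rmap3_eq_mk3 (g : ℤ[X]) : Rmap3 g = mk3 g := by
  have hmod : ∀ h ∈ g.support, h % 3 ∈ Finset.range 3 :=
    fun h _ => Finset.mem_range.mpr (Nat.mod_lt h three_pos)
  symm
  calc mk3 g = ∑ h ∈ g.support, mk3 (C (g.coeff h)) * mk3 X ^ (h % 3) := by
        conv_lhs => rw [g.as_sum_support_C_mul_X_pow]
        simp only [map_sum, map_mul, map_pow, ← pow_eq_pow_mod _ mk3_X_pow_three]
    _ = ∑ i ∈ Finset.range 3, ∑ h ∈ g.support with h % 3 = i,
          mk3 (C (g.coeff h)) * mk3 X ^ (h % 3) :=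
        (Finset.sum_fiberwise_of_maps_to hmod _).symm
    _ = ∑ i ∈ Finset.range 3, mk3 (C (Rcoef i g)) * mk3 X ^ i := by
        refine Finset.sum_congr rfl fun i _ => ?_
        rw [Rcoef, map_sum, map_sum, Finset.sum_mul]
        exact Finset.sum_congr rfl fun h hh => by rw [(Finset.mem_filter.mp hh).2]
    _ = Rmap3 g := by
        simp only [Finset.sum_range_succ, Finset.sum_range_zero, Rmap3]
        ring

lemma mem_Mset_of_mem_orbitSubOne {u : K3} (hu : u ∈ orbitSubOne (mk3 X)) : u ∈ Mset := by
  obtain ⟨_, ⟨n, rfl⟩, rfl⟩ := hu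
  have hT := mk3_X_pow_three
  have h6 : (-mk3 X) ^ 6 = 1 := by linear_combination (mk3 X ^ 3 + 1) * hT
  show (-mk3 X) ^ n * (mk3 X - 1) ∈ Mset
  rw [pow_eq_pow_mod n h6]
  have : n % 6 < 6 := Nat.mod_lt n (by norm_num)
  simp only [Mset, Set.mem_insert_iff, Set.mem_singleton_iff]
  interval_cases n % 6
  · exact .inr (.inl (by ring))
  · exact .inr (.inr (.inr (.inr (.inl (by ring)))))
  · exact .inr (.inr (.inr (.inr (.inr (.inl (by ring))))))
  · exact .inr (.inr (.inl (by linear_combination (1 - mk3 X) * hT)))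
  · exact .inr (.inr (.inr (.inl (by linear_combination (mk3 X ^ 2 - mk3 X) * hT))))
  · exact .inr (.inr (.inr (.inr (.inr (.inr
      (by linear_combination (mk3 X ^ 2 - mk3 X ^ 3) * hT))))))

theorem Smap_mem_Mset (A : List ℕ) (hA : ∀ i ∈ A, i ≤ 2) : Smap A ∈ Mset := by
  have hpair := admissiblePair_map_DeltaRev mk3 mk3_X_pow_three A.reverse
    fun i hi => hA i (List.mem_reverse.mp hi)
  rw [Smap, Rmap3_eq_mk3, Delta]
  rcases hpair.snd_mem mk3_X_pow_three with h0 | hu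
  · rw [h0]
    exact Set.mem_insert 0 _
  · exact mem_Mset_of_mem_orbitSubOne hu
end

section
/- For all positive integers a ≤ b, every coefficient of the polynomial ∏_{i=a}^{b} (1 − x^{f_i}) lies in {−1, 0, 1}. -/
/-- The Fibonacci numbers `f₁ = 1, f₂ = 2, fᵢ = fᵢ₋₁ + fᵢ₋₂` (value at `0` is junk). -/
def fibW : ℕ → ℕ
  | 0 => 0
  | 1 => 1
  | 2 => 2
  | (n + 3) => fibW (n + 2) + fibW (n + 1)

/-- `r d i n` is the number of partitions of `n` into distinct Fibonacci numbers
`f_j` (`j ≥ 1`) whose number of parts is `≡ i (mod d)`. -/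
noncomputable def r (d i n : ℕ) : ℕ :=
  Nat.card {S : Finset ℕ // (∀ j ∈ S, 1 ≤ j) ∧ (∑ j ∈ S, fibW j) = n ∧ S.card % d = i}

open Polynomial Finset


lemma fibW_add (i : ℕ) (hi : 1 ≤ i) : fibW (i + 2) = fibW (i + 1) + fibW i := by
  cases i with
  | zero => omega
  | succ j => rfl

lemma fibW_pos : ∀ i, 1 ≤ i → 1 ≤ fibW i := by
  intro i
  induction i using Nat.strong_induction_on with
  | _ i IH =>
    match i with
    | 0 => intro h; omega
    | 1 => intro _; norm_num [fibW]
    | 2 => intro _; norm_num [fibW]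
    | (j+3) =>
      intro _
      have h1 := IH (j+2) (by omega) (by omega)
      show 1 ≤ fibW (j+2) + fibW (j+1)
      omega

lemma fibW_lt_succ (i : ℕ) (hi : 1 ≤ i) : fibW i < fibW (i + 1) := by
  match i, hi with
  | 1, _ => norm_num [fibW]
  | (j+2), _ =>
    have := fibW_pos (j+1) (by omega)
    have h : fibW (j+3) = fibW (j+2) + fibW (j+1) := fibW_add (j+1) (by omega)
    show fibW (j+2) < fibW (j+3)
    omega

lemma fibW_lt (i j : ℕ) (hi : 1 ≤ i) (hij : i < j) : fibW i < fibW j := by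
  induction j with
  | zero => omega
  | succ k IH =>
    rcases Nat.lt_or_ge i k with h | h
    · exact lt_trans (IH h) (fibW_lt_succ k (by omega))
    · have : i = k := by omega
      subst this
      exact fibW_lt_succ i hi

lemma fibW_le (i j : ℕ) (hi : 1 ≤ i) (hij : i ≤ j) : fibW i ≤ fibW j := by
  rcases Nat.eq_or_lt_of_le hij with rfl | h
  · exact le_refl _
  · exact le_of_lt (fibW_lt i j hi h)

lemma fibW_two_le (i : ℕ) (hi : 2 ≤ i) : 2 ≤ fibW i := by
  have := fibW_le 2 i (by omega) hi
  simpa [fibW] using this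

/-- the sum of the exponents -/
def Sw (a b : ℕ) : ℕ := ∑ i ∈ Finset.Icc a b, fibW i

/-- the product -/
noncomputable def Qw (a b : ℕ) : Polynomial ℤ := ∏ i ∈ Finset.Icc a b, (1 - X ^ fibW i)

lemma Sw_succ {a b : ℕ} (h : a ≤ b + 1) : Sw a (b+1) = Sw a b + fibW (b+1) :=
  Finset.sum_Icc_succ_top h _

lemma Qw_succ {a b : ℕ} (h : a ≤ b + 1) : Qw a (b+1) = Qw a b * (1 - X ^ fibW (b+1)) :=
  Finset.prod_Icc_succ_top h _

lemma Sw_formula (a : ℕ) (ha : 1 ≤ a) : ∀ b, a ≤ b + 1 → Sw a b + fibW (a+1) = fibW (b+2) := by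
  intro b
  induction b with
  | zero =>
    intro h
    have : a = 1 := by omega
    subst this
    simp [Sw]
  | succ k IH =>
    intro h
    rcases Nat.lt_or_ge k.succ a with h2 | h2
    · have : a = k + 2 := by omega
      subst this
      have : Finset.Icc (k+2) (k+1) = ∅ := Finset.Icc_eq_empty (by omega)
      simp [Sw, this]
    · rw [Sw_succ (by omega)]
      have hk := IH (by omega)
      have h3 : fibW (k+3) = fibW (k+2) + fibW (k+1) := fibW_add (k+1) (by omega)
      show Sw a k + fibW (k+1) + fibW (a+1) = fibW (k+3)
      omega

lemma Qw_natDegree_le (a b : ℕ) : (Qw a b).natDegree ≤ Sw a b := by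
  refine le_trans (Polynomial.natDegree_prod_le _ _) (Finset.sum_le_sum ?_)
  intro i _
  refine le_trans (Polynomial.natDegree_sub_le _ _) ?_
  simp [Polynomial.natDegree_X_pow]

lemma Qw_coeff_zero_of_lt {a b n : ℕ} (h : Sw a b < n) : (Qw a b).coeff n = 0 :=
  Polynomial.coeff_eq_zero_of_natDegree_lt (lt_of_le_of_lt (Qw_natDegree_le a b) h)

lemma Qw_coeff_succ {a b : ℕ} (h : a ≤ b + 1) (n : ℕ) :
    (Qw a (b+1)).coeff n =
      (Qw a b).coeff n - (if fibW (b+1) ≤ n then (Qw a b).coeff (n - fibW (b+1)) else 0) := by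
  rw [Qw_succ h, mul_sub, mul_one, Polynomial.coeff_sub, Polynomial.coeff_mul_X_pow']

lemma Qw_coeff_lt {a b n : ℕ} (h : a ≤ b + 1) (hn : n < fibW (b+1)) :
    (Qw a (b+1)).coeff n = (Qw a b).coeff n := by
  rw [Qw_coeff_succ h, if_neg (by omega), sub_zero]

lemma Qw_reflect (a : ℕ) (ha : 1 ≤ a) :
    ∀ b, a ≤ b + 1 → reflect (Sw a b) (Qw a b) = C ((-1)^(b+1-a)) * Qw a b := by
  intro b
  induction b with
  | zero =>
    intro h
    have : a = 1 := by omega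
    subst this
    simp [Sw, Qw]
  | succ k IH =>
    intro h
    rcases Nat.lt_or_ge k.succ a with h2 | h2
    · have : a = k + 2 := by omega
      subst this
      have he : Finset.Icc (k+2) (k+1) = ∅ := Finset.Icc_eq_empty (by omega)
      simp [Sw, Qw, he]
    · rw [Sw_succ (by omega), Qw_succ (by omega)]
      rw [Polynomial.reflect_mul _ _ (Qw_natDegree_le a k)
        (le_trans (Polynomial.natDegree_sub_le _ _) (by simp [Polynomial.natDegree_X_pow]))]
      rw [IH (by omega)]
      have hrefl : reflect (fibW (k+1)) (1 - X ^ fibW (k+1)) =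
          -(1 - X ^ fibW (k+1) : Polynomial ℤ) := by
        rw [Polynomial.reflect_sub, Polynomial.reflect_one, Polynomial.reflect_monomial,
          Polynomial.revAt_le (le_refl _)]
        simp
      rw [hrefl]
      have hexp : (k+1+1) - a = ((k+1)-a) + 1 := by omega
      rw [hexp, pow_succ]
      simp only [map_mul, map_neg, map_one, map_pow]
      ring

lemma Qw_palin {a b m : ℕ} (ha : 1 ≤ a) (hab : a ≤ b + 1) (hm : m ≤ Sw a b) :
    (Qw a b).coeff (Sw a b - m) = (-1)^(b+1-a) * (Qw a b).coeff m := by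
  have h := congrArg (fun p => Polynomial.coeff p m) (Qw_reflect a ha b hab)
  simp only [Polynomial.coeff_reflect, Polynomial.coeff_C_mul] at h
  rwa [Polynomial.revAt_le hm] at h

lemma abs_key (s x y : ℤ) (hs : s = 1 ∨ s = -1) (hx : |x| ≤ 1) (hy : |y| ≤ 1)
    (h : 0 ≤ s * (x * y)) : |s * x - y| ≤ 1 := by
  obtain ⟨h1, h2⟩ := abs_le.mp hx
  obtain ⟨h3, h4⟩ := abs_le.mp hy
  rcases hs with rfl | rfl <;> interval_cases x <;> interval_cases y <;>
    simp_all

lemma sign_key (s u v : ℤ) (hs : s = 1 ∨ s = -1) (hu : |u| ≤ 1) (hv : |v| ≤ 1)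
    (h : 0 ≤ s * (v * u)) : 0 ≤ s * ((s * u - v) * u) := by
  obtain ⟨h1, h2⟩ := abs_le.mp hu
  obtain ⟨h3, h4⟩ := abs_le.mp hv
  rcases hs with rfl | rfl <;> interval_cases u <;> interval_cases v <;>
    simp_all

lemma neg_one_pow_cases (k : ℕ) : ((-1:ℤ))^k = 1 ∨ ((-1:ℤ))^k = -1 := by
  rcases Nat.even_or_odd k with h | h
  · left; exact h.neg_one_pow
  · right; exact h.neg_one_pow

lemma main_ind (a : ℕ) (ha : 1 ≤ a) : ∀ t : ℕ,
    (∀ n, |(Qw a (a+t)).coeff n| ≤ 1) ∧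
    (∀ m m', m + m' = Sw a (a + t - 1) →
      0 ≤ (-1:ℤ)^t * ((Qw a (a+t)).coeff m * (Qw a (a+t)).coeff m')) := by
  intro t
  induction t using Nat.strong_induction_on with
  | _ t IH =>
  cases t with
  | zero =>
    have hQ : Qw a (a + 0) = 1 - X ^ fibW a := by simp [Qw]
    have hfa : 1 ≤ fibW a := fibW_pos a ha
    constructor
    · intro n
      rw [hQ, coeff_sub, coeff_one, coeff_X_pow]
      split_ifs <;> norm_num
    · intro m m' hmm
      have hS : Sw a (a + 0 - 1) = 0 := by
        have he : Finset.Icc a (a + 0 - 1) = ∅ := Finset.Icc_eq_empty (by omega)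
        show (∑ i ∈ Finset.Icc a (a + 0 - 1), fibW i) = 0
        rw [he, Finset.sum_empty]
      rw [hS] at hmm
      obtain ⟨rfl, rfl⟩ : m = 0 ∧ m' = 0 := by omega
      rw [hQ]
      norm_num [coeff_X_pow, (show ¬ (0 = fibW a) by omega)]
  | succ t' =>
    have hidx : a + (t' + 1) = (a + t') + 1 := by omega
    have hidx2 : a + (t' + 1) - 1 = a + t' := by omega
    have hSf : Sw a (a+t') + fibW (a+1) = fibW (a+t'+2) := Sw_formula a ha _ (by omega)
    have hfib : fibW (a+t'+2) = fibW (a+t'+1) + fibW (a+t') := fibW_add (a+t') (by omega)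
    have hfa1 : 2 ≤ fibW (a+1) := fibW_two_le (a+1) (by omega)
    have hmono : fibW (a+t') ≤ fibW (a+t'+1) := fibW_le _ _ (by omega) (by omega)
    constructor
    · -- P1 : coefficient bound
      intro n
      rw [hidx, Qw_coeff_succ (by omega) n]
      by_cases hf : fibW (a+t'+1) ≤ n
      · rw [if_pos hf]
        by_cases hS : Sw a (a+t') < n
        · rw [Qw_coeff_zero_of_lt hS, zero_sub, abs_neg]
          exact (IH t' (by omega)).1 _
        · push_neg at hS
          have ht'1 : 1 ≤ t' := by
            by_contra h0
            have ht0 : t' = 0 := by omega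
            subst ht0
            have hSa : Sw a (a + 0) = fibW a := by simp [Sw]
            have := fibW_lt a (a+1) ha (by omega)
            omega
          obtain ⟨t'', rfl⟩ : ∃ t'', t' = t'' + 1 := ⟨t' - 1, by omega⟩
          simp only [show a + (t''+1) = a + t'' + 1 by omega,
            show a + t'' + 1 + 1 = a + t'' + 2 by omega,
            show a + t'' + 1 + 2 = a + t'' + 3 by omega,
            show t'' + 1 + 1 = t'' + 2 by omega] at hSf hfib hS hf hmono ⊢
          have hSf2 : Sw a (a+t''-1) + fibW (a+1) = fibW (a+t''+1) := by
            have h := Sw_formula a ha (a+t''-1) (by omega)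
            rwa [show a+t''-1+2 = a+t''+1 by omega] at h
          have hfib2 : fibW (a+t''+2) = fibW (a+t''+1) + fibW (a+t'') := fibW_add (a+t'') (by omega)
          set m1 := Sw a (a+t''+1) - n with hm1
          set m2 := n - fibW (a+t''+2) with hm2
          have hsum12 : m1 + m2 = Sw a (a+t''-1) := by omega
          have hm1lt : m1 < fibW (a+t''+1) := by omega
          have hm2lt : m2 < fibW (a+t''+1) := by omega
          have hpal : (Qw a (a+t''+1)).coeff (Sw a (a+t''+1) - m1)
              = (-1:ℤ)^(a+t''+1+1-a) * (Qw a (a+t''+1)).coeff m1 :=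
            Qw_palin ha (by omega) (by omega)
          rw [show Sw a (a+t''+1) - m1 = n by omega,
              show a+t''+1+1-a = t''+2 by omega] at hpal
          have hr1 : (Qw a (a+t''+1)).coeff m1 = (Qw a (a+t'')).coeff m1 :=
            Qw_coeff_lt (by omega) hm1lt
          have hr2 : (Qw a (a+t''+1)).coeff m2 = (Qw a (a+t'')).coeff m2 :=
            Qw_coeff_lt (by omega) hm2lt
          have hP2 := (IH t'' (by omega)).2 m1 m2 hsum12
          have hb1 := (IH t'' (by omega)).1 m1
          have hb2 := (IH t'' (by omega)).1 m2
          rw [hpal, hr1, hr2]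
          rw [show ((-1:ℤ))^(t''+2) = (-1:ℤ)^t'' by ring]
          exact abs_key _ _ _ (neg_one_pow_cases t'') hb1 hb2 hP2
      · rw [if_neg hf, sub_zero]
        exact (IH t' (by omega)).1 n
    · -- P2 : pairing sign condition
      intro m m' hsum
      rw [hidx2] at hsum
      rw [hidx]
      wlog hle : m' ≤ m generalizing m m' with H
      · have h2 := H m' m (by omega) (by omega)
        rw [mul_comm ((Qw a (a+t'+1)).coeff m) ((Qw a (a+t'+1)).coeff m')]
        exact h2
      have hm'f : m' < fibW (a+t'+1) := by omega
      have hr' : (Qw a (a+t'+1)).coeff m' = (Qw a (a+t')).coeff m' :=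
        Qw_coeff_lt (by omega) hm'f
      have hpal : (Qw a (a+t')).coeff (Sw a (a+t') - m')
          = (-1:ℤ)^(a+t'+1-a) * (Qw a (a+t')).coeff m' :=
        Qw_palin ha (by omega) (by omega)
      rw [show Sw a (a+t') - m' = m by omega, show a+t'+1-a = t'+1 by omega] at hpal
      by_cases hmf : m < fibW (a+t'+1)
      · have hrm : (Qw a (a+t'+1)).coeff m = (Qw a (a+t')).coeff m :=
          Qw_coeff_lt (by omega) hmf
        rw [hrm, hr', hpal]
        rcases neg_one_pow_cases (t'+1) with hs | hs <;> rw [hs] <;>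
          nlinarith [sq_nonneg ((Qw a (a+t')).coeff m')]
      · push_neg at hmf
        have ht'1 : 1 ≤ t' := by
          by_contra h0
          have ht0 : t' = 0 := by omega
          subst ht0
          have hSa : Sw a (a + 0) = fibW a := by simp [Sw]
          have := fibW_lt a (a+1) ha (by omega)
          omega
        obtain ⟨t'', rfl⟩ : ∃ t'', t' = t'' + 1 := ⟨t' - 1, by omega⟩
        simp only [show a + (t''+1) = a + t'' + 1 by omega,
          show a + t'' + 1 + 1 = a + t'' + 2 by omega,
          show a + t'' + 1 + 2 = a + t'' + 3 by omega,
          show t'' + 1 + 1 = t'' + 2 by omega] at hSf hfib hsum hmono hmf hm'f hr' hpal ⊢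
        have hSf2 : Sw a (a+t''-1) + fibW (a+1) = fibW (a+t''+1) := by
          have h := Sw_formula a ha (a+t''-1) (by omega)
          rwa [show a+t''-1+2 = a+t''+1 by omega] at h
        have hfib2 : fibW (a+t''+2) = fibW (a+t''+1) + fibW (a+t'') := fibW_add (a+t'') (by omega)
        -- expand coeff at m
        have hstep : (Qw a (a+t''+2)).coeff m = (Qw a (a+t''+1)).coeff m -
            (if fibW (a+t''+2) ≤ m then (Qw a (a+t''+1)).coeff (m - fibW (a+t''+2)) else 0) := by
          have h := Qw_coeff_succ (a := a) (b := a+t''+1) (by omega) m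
          rwa [show a+t''+1+1 = a+t''+2 by omega] at h
        rw [hstep, if_pos (by omega), hr', hpal]
        have hsum2 : (m - fibW (a+t''+2)) + m' = Sw a (a+t''-1) := by omega
        have hmfl : m - fibW (a+t''+2) < fibW (a+t''+1) := by omega
        have hm'l : m' < fibW (a+t''+1) := by omega
        have hru : (Qw a (a+t''+1)).coeff m' = (Qw a (a+t'')).coeff m' :=
          Qw_coeff_lt (by omega) hm'l
        have hrv : (Qw a (a+t''+1)).coeff (m - fibW (a+t''+2)) =
            (Qw a (a+t'')).coeff (m - fibW (a+t''+2)) :=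
          Qw_coeff_lt (by omega) hmfl
        rw [hru, hrv]
        have hP2 := (IH t'' (by omega)).2 (m - fibW (a+t''+2)) m' hsum2
        have hb1 := (IH t'' (by omega)).1 m'
        have hb2 := (IH t'' (by omega)).1 (m - fibW (a+t''+2))
        rw [show ((-1:ℤ))^(t''+2) = (-1:ℤ)^t'' by ring]
        exact sign_key _ _ _ (neg_one_pow_cases t'') hb1 hb2 hP2

theorem zhao_coeff_bound (a b : ℕ) (ha : 1 ≤ a) (hab : a ≤ b) (n : ℕ) :
    |(∏ i ∈ Finset.Icc a b, (1 - Polynomial.X ^ fibW i : Polynomial ℤ)).coeff n| ≤ 1 := by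
  have h := (main_ind a ha (b - a)).1 n
  rw [show a + (b - a) = b by omega] at h
  exact h
end

section
/- For every positive integer n, exactly one of the following holds for the triple (r_{3,0}(n), r_{3,1}(n), r_{3,2}(n)): all three are equal, or two are equal and the third differs from them by exactly 1. -/
open Finset

theorem fibW_add_three (c : ℕ) : fibW (c + 3) = fibW (c + 2) + fibW (c + 1) := rfl

theorem fibW_pos_s18 (c : ℕ) : 0 < fibW (c + 1) := by
  induction c using Nat.strong_induction_on with
  | _ c ih =>
    match c with
    | 0 | 1 => decide
    | c + 2 => exact Nat.add_pos_left (ih (c + 1) (by omega)) _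

theorem fibW_lt_fibW_succ (c : ℕ) : fibW (c + 1) < fibW (c + 2) := by
  cases c with
  | zero => decide
  | succ c => exact Nat.lt_add_of_pos_right (fibW_pos_s18 c)

theorem fibW_mono : Monotone fibW :=
  monotone_nat_of_le_succ fun
    | 0 => by decide
    | c + 1 => (fibW_lt_fibW_succ c).le

theorem fibW_add_two_le_two_mul (c : ℕ) : fibW (c + 2) ≤ 2 * fibW (c + 1) := by
  cases c with
  | zero => decide
  | succ c =>
    show fibW (c + 3) ≤ 2 * fibW (c + 2)
    have := fibW_mono (by omega : c + 1 ≤ c + 2)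
    rw [fibW_add_three]; omega

theorem sum_Icc_fibW (m : ℕ) : ∑ j ∈ Icc 1 m, fibW j + 2 = fibW (m + 2) := by
  induction m with
  | zero => rfl
  | succ m ih =>
    rw [← insert_Icc_right_eq_Icc_add_one (by omega), sum_insert (by simp)]
    simp only [fibW]; omega

theorem exists_fibW_le_lt_fibW {n : ℕ} (hn : 1 ≤ n) :
    ∃ c, fibW (c + 1) ≤ n ∧ n < fibW (c + 2) := by
  induction n, hn using Nat.le_induction with
  | base => exact ⟨0, by decide⟩
  | succ m _ ih =>
    obtain ⟨c, hcm, hmc⟩ := ih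
    by_cases h : m + 1 < fibW (c + 2)
    · exact ⟨c, by omega, h⟩
    · have h2 : fibW (c + 2) < fibW (c + 3) := fibW_lt_fibW_succ (c + 1)
      exact ⟨c + 1, (by omega : fibW (c + 2) ≤ m + 1), (by omega : m + 1 < fibW (c + 3))⟩

def partCount (m n i : ℕ) : ℕ :=
  #{S ∈ (Icc 1 m).powerset | ∑ j ∈ S, fibW j = n ∧ #S % 3 = i}

theorem partCount_succ (m n i : ℕ) :
    partCount (m + 1) n i = partCount m n i +
      #{S ∈ (Icc 1 m).powerset | ∑ j ∈ S, fibW j + fibW (m + 1) = n ∧ (#S + 1) % 3 = i} := by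
  simp only [partCount, card_filter]
  rw [← insert_Icc_right_eq_Icc_add_one (by omega), sum_powerset_insert (by simp)]
  congr 1
  refine sum_congr rfl fun S hS => ?_
  have hm : m + 1 ∉ S := fun h => by simpa using mem_powerset.1 hS h
  rw [sum_insert hm, card_insert_of_notMem hm, add_comm (fibW _)]

theorem partCount_succ_of_lt {m n : ℕ} (h : n < fibW (m + 1)) (i : ℕ) :
    partCount (m + 1) n i = partCount m n i := by
  rw [partCount_succ, add_eq_left, card_eq_zero, filter_eq_empty_iff]
  omega

theorem partCount_succ_add (m n : ℕ) {i : ℕ} (hi : i < 3) :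
    partCount (m + 1) (n + fibW (m + 1)) ((i + 1) % 3) =
      partCount m (n + fibW (m + 1)) ((i + 1) % 3) + partCount m n i := by
  rw [partCount_succ, partCount]
  congr 2
  ext S
  simp only [mem_filter, and_congr_right_iff]
  omega

theorem partCount_eq_zero {m n : ℕ} (h : fibW (m + 2) ≤ n + 1) (i : ℕ) :
    partCount m n i = 0 := by
  rw [partCount, card_eq_zero, filter_eq_empty_iff]
  intro S hS hSn
  have := sum_le_sum_of_subset (f := fibW) (mem_powerset.1 hS)
  have := sum_Icc_fibW m
  omega

/-- `(a, b)` stands for `a + b ω ∈ ℤ[ω]`; as `1 + ω + ω² = 0`, `omegaSum m n` is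
`∑ ω^|S|` over the partitions `S` of `n` into distinct parts among `f₁, …, f_m`. -/
def mulOmega (p : ℤ × ℤ) : ℤ × ℤ := (-p.2, p.1 - p.2)

def omegaSum (m n : ℕ) : ℤ × ℤ :=
  ((partCount m n 0 : ℤ) - partCount m n 2, (partCount m n 1 : ℤ) - partCount m n 2)

theorem omegaSum_succ_of_lt {m n : ℕ} (h : n < fibW (m + 1)) :
    omegaSum (m + 1) n = omegaSum m n := by
  simp only [omegaSum, partCount_succ_of_lt h]

theorem omegaSum_succ_add (m n : ℕ) :
    omegaSum (m + 1) (n + fibW (m + 1)) =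
      omegaSum m (n + fibW (m + 1)) + mulOmega (omegaSum m n) := by
  have h0 := partCount_succ_add m n (i := 2) (by norm_num)
  have h1 := partCount_succ_add m n (i := 0) (by norm_num)
  have h2 := partCount_succ_add m n (i := 1) (by norm_num)
  simp only [Nat.reduceAdd, Nat.reduceMod] at h0 h1 h2
  simp only [omegaSum, mulOmega, h0, h1, h2, Prod.mk_add_mk, Prod.mk.injEq]
  push_cast
  constructor <;> ring

theorem omegaSum_eq_zero {m n : ℕ} (h : fibW (m + 2) ≤ n + 1) : omegaSum m n = 0 := by
  simp [omegaSum, partCount_eq_zero h]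

theorem omegaSum_of_le {c m n : ℕ} (hn : n < fibW (c + 1)) (hcm : c ≤ m) :
    omegaSum m n = omegaSum c n := by
  induction m, hcm using Nat.le_induction with
  | base => rfl
  | succ m hcm ih => rw [omegaSum_succ_of_lt (hn.trans_le (fibW_mono (by omega))), ih]

theorem omegaSum_fibW_add_three (k v : ℕ) :
    omegaSum (k + 2) (v + fibW (k + 3)) = mulOmega (omegaSum (k + 1) (v + fibW (k + 1))) := by
  have hv : v + fibW (k + 3) = v + fibW (k + 1) + fibW (k + 2) := by rw [fibW_add_three]; ring
  have hzero : omegaSum (k + 1) (v + fibW (k + 3)) = 0 :=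
    omegaSum_eq_zero (show fibW (k + 3) ≤ _ by omega)
  rw [hv, omegaSum_succ_add, ← hv, hzero, zero_add]

def cascade (A B : ℤ × ℤ) : ℕ → (ℤ × ℤ) × (ℤ × ℤ)
  | 0 => (mulOmega B, 0)
  | 1 => (mulOmega A, 0)
  | k + 2 => (mulOmega (cascade A B k).1 + mulOmega A, mulOmega (cascade A B k).1)

theorem omegaSum_eq_cascade {c u : ℕ} (hc : fibW (c + 1) ≤ u + 1) (hu : u < fibW (c + 2)) :
    ∀ j, (omegaSum (c + j + 1) (u + fibW (c + j + 1)),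
        omegaSum (c + j) (u + fibW (c + j + 1))) = cascade (omegaSum (c + 1) u) (omegaSum c u) j
  | 0 => by
    have hzero : omegaSum c (u + fibW (c + 1)) = 0 :=
      omegaSum_eq_zero (by have := fibW_add_two_le_two_mul c; omega)
    simp only [add_zero, omegaSum_succ_add, hzero, zero_add, cascade]
  | 1 => by
    have hzero : omegaSum (c + 1) (u + fibW (c + 2)) = 0 :=
      omegaSum_eq_zero (show fibW (c + 3) ≤ _ by rw [fibW_add_three]; omega)
    simp only [omegaSum_succ_add, hzero, zero_add, cascade]
  | k + 2 => by
    have hA : omegaSum (c + k + 2) u = omegaSum (c + 1) u := omegaSum_of_le hu (by omega)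
    have hB := omegaSum_fibW_add_three (c + k) u
    have ih := omegaSum_eq_cascade hc hu k
    show (omegaSum (c + k + 2 + 1) (u + fibW (c + k + 2 + 1)),
      omegaSum (c + k + 2) (u + fibW (c + k + 3))) = _
    rw [omegaSum_succ_add, hA, hB, cascade, ← ih]

/-- `0` and the units `1, -1, ω, -ω, -ω², ω²` of `ℤ[ω]`. -/
def smallValues : List (ℤ × ℤ) := [0, (1, 0), (-1, 0), (0, 1), (0, -1), (1, 1), (-1, -1)]

def Admissible (p : (ℤ × ℤ) × (ℤ × ℤ)) : Prop :=
  p.1 ∈ smallValues ∧ p.2 ∈ smallValues ∧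
    (p.1 = 0 ∨ p.2 = 0 ∨ p.2 = p.1 ∨ p.2 = p.1 + mulOmega p.1)

instance : DecidablePred Admissible := fun _ => by unfold Admissible; infer_instance

theorem cascade_add_two_periodic (A B : ℤ × ℤ) :
    Function.Periodic (fun k => cascade A B (k + 2)) 6 := by
  intro k
  simp only [cascade, mulOmega, Prod.mk_add_mk, Prod.mk.injEq]
  refine ⟨⟨?_, ?_⟩, ?_, ?_⟩ <;> ring

theorem admissible_cascade_of_lt :
    ∀ A ∈ smallValues, ∀ B ∈ smallValues, Admissible (A, B) → ∀ g < 8,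
      Admissible (cascade A B g) := by
  decide

theorem Admissible.cascade {A B : ℤ × ℤ} (h : Admissible (A, B)) :
    ∀ g, Admissible (cascade A B g)
  | 0 => admissible_cascade_of_lt A h.1 B h.2.1 h 0 (by norm_num)
  | 1 => admissible_cascade_of_lt A h.1 B h.2.1 h 1 (by norm_num)
  | k + 2 => by
    rw [← (cascade_add_two_periodic A B).map_mod_nat k]
    exact admissible_cascade_of_lt A h.1 B h.2.1 h _ (by omega)

-- The slack in `fibW (c + 1) ≤ n + 1` only serves `n = 0`, which starts the induction with `c = 0`.
theorem exists_admissible_omegaSum (n : ℕ) :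
    ∃ c, fibW (c + 1) ≤ n + 1 ∧ n < fibW (c + 2) ∧
      Admissible (omegaSum (c + 1) n, omegaSum c n) := by
  induction n using Nat.strong_induction_on with
  | _ n ih =>
    rcases Nat.eq_zero_or_pos n with rfl | hn
    · exact ⟨0, by decide, by decide, by decide⟩
    obtain ⟨c, hcn, hnc⟩ := exists_fibW_le_lt_fibW hn
    obtain ⟨d, hdu, hud, hadm⟩ := ih (n - fibW (c + 1)) (by have := fibW_pos_s18 c; omega)
    obtain ⟨g, rfl⟩ : ∃ g, c = d + g := Nat.exists_eq_add_of_le <| by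
      by_contra! h
      have := fibW_mono (show c + 2 ≤ d + 1 by omega)
      have := fibW_pos_s18 c
      omega
    have hcascade := omegaSum_eq_cascade hdu hud g
    rw [Nat.sub_add_cancel hcn] at hcascade
    exact ⟨d + g, by omega, hnc, hcascade ▸ hadm.cascade g⟩

theorem r_three_eq_partCount {m n : ℕ} (hn : n < fibW (m + 1)) (i : ℕ) :
    r 3 i n = partCount m n i := by
  have hmem : ∀ S : Finset ℕ, ((∀ j ∈ S, 1 ≤ j) ∧ ∑ j ∈ S, fibW j = n ∧ #S % 3 = i) ↔
      S ∈ {S ∈ (Icc 1 m).powerset | ∑ j ∈ S, fibW j = n ∧ #S % 3 = i} := by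
    intro S
    simp only [mem_filter, mem_powerset, subset_iff, mem_Icc]
    refine ⟨fun ⟨hS, hsum, hcard⟩ => ⟨fun j hj => ⟨hS j hj, ?_⟩, hsum, hcard⟩,
      fun ⟨hS, hsum, hcard⟩ => ⟨fun j hj => (hS hj).1, hsum, hcard⟩⟩
    by_contra! hj'
    have := single_le_sum (fun k _ => Nat.zero_le (fibW k)) hj
    have := fibW_mono (show m + 1 ≤ j by omega)
    omega
  rw [r, Nat.card_congr (Equiv.subtypeEquivRight hmem), Nat.card_eq_finsetCard, partCount]

theorem trichotomy_general (n : ℕ) :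
    Xor'
      (r 3 0 n = r 3 1 n ∧ r 3 1 n = r 3 2 n)
      (((r 3 0 n : ℤ) = r 3 1 n ∧ |(r 3 2 n : ℤ) - r 3 0 n| = 1) ∨
       ((r 3 0 n : ℤ) = r 3 2 n ∧ |(r 3 1 n : ℤ) - r 3 0 n| = 1) ∨
       ((r 3 1 n : ℤ) = r 3 2 n ∧ |(r 3 0 n : ℤ) - r 3 1 n| = 1)) := by
  obtain ⟨c, -, hnc, hsmall, -⟩ := exists_admissible_omegaSum n
  simp only [omegaSum, smallValues, List.mem_cons, List.not_mem_nil, Prod.ext_iff,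
    Prod.fst_zero, Prod.snd_zero, or_false] at hsmall
  simp only [r_three_eq_partCount hnc, Xor', xor_def, abs_eq zero_le_one]
  omega

theorem trichotomy (n : ℕ) (hn : 0 < n) :
    Xor'
      (r 3 0 n = r 3 1 n ∧ r 3 1 n = r 3 2 n)
      (((r 3 0 n : ℤ) = r 3 1 n ∧ |(r 3 2 n : ℤ) - r 3 0 n| = 1) ∨
       ((r 3 0 n : ℤ) = r 3 2 n ∧ |(r 3 1 n : ℤ) - r 3 0 n| = 1) ∨
       ((r 3 1 n : ℤ) = r 3 2 n ∧ |(r 3 0 n : ℤ) - r 3 1 n| = 1)) :=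
  trichotomy_general n
end
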